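/- Let S and A be finite nonempty types, let γ ∈ ℝ with 0 ≤ γ < 1, let P : S → A → S → ℝ be a transition kernel, let Q : S → A → ℝ, let ρUN : S → A → ℝ with 0 ≤ ρUN s a for all s, a, let μ0 : S → ℝ with 0 < μ0 s for all s, and let ψ : ℝ → ℝ be monotone nondecreasing. For π : S → A → ℝ define Vπ s = ∑ a, (π s a * Q s a + negMulLog (π s a)), rπ s a = Q s a − γ * ∑ s', P s a s' * Vπ s', and L π = (∑ s, ∑ a, ρUN s a * rπ s a) − (1 − γ) * (∑ s, μ0 s * Vπ s) + (∑ s, ∑ a, ψ (rπ s a)). Define VQ : S → ℝ by VQ s = log (∑ a, exp (Q s a)) and rQ : S → A → ℝ by rQ s a = Q s a − γ * ∑ s', P s a s' * VQ s'. Then the value F(Q) = (∑ s, ∑ a, ρUN s a * rQ s a) − (1 − γ) * (∑ s, μ0 s * VQ s) + (∑ s, ∑ a, ψ (rQ s a)) is the least value of L over policies: F(Q) ∈ L '' {π | ∀ s, π s ∈ stdSimplex ℝ A} and F(Q) ≤ L π for every policy π. -/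

import Mathlib

/-!
For each state, `∑ a, (p a * Q s a + negMulLog (p a))` is maximised over the simplex by the
softmax `q` of `Q s ·`, with maximum `log ∑ a, exp (Q s a)`: writing `p = (p / q) * q` it equals
`log ∑ exp Q s - KL(p ‖ q)`. So `Vπ ≤ VQ` pointwise with equality at the softmax policy, and
`L π` is an antitone function of `Vπ`, as is the recovered reward `Q - γ P V` of `V`.
-/

open Finset

section Softmax

open Real

variable {A : Type*} [Fintype A]

noncomputable def softmax (f : A → ℝ) (a : A) : ℝ := exp (f a) / ∑ b, exp (f b)

variable [Nonempty A] (f : A → ℝ)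

lemma sum_exp_pos : 0 < ∑ b, exp (f b) :=
  sum_pos (fun b _ ↦ exp_pos (f b)) univ_nonempty

lemma softmax_pos (a : A) : 0 < softmax f a :=
  div_pos (exp_pos _) (sum_exp_pos f)

lemma sum_softmax : ∑ a, softmax f a = 1 := by
  simp only [softmax, ← sum_div, div_self (sum_exp_pos f).ne']

lemma softmax_mem_stdSimplex : softmax f ∈ stdSimplex ℝ A :=
  ⟨fun a ↦ (softmax_pos f a).le, sum_softmax f⟩

lemma negMulLog_softmax (a : A) :
    negMulLog (softmax f a) = softmax f a * (log (∑ b, exp (f b)) - f a) := by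
  rw [negMulLog, softmax, log_div (exp_ne_zero _) (sum_exp_pos f).ne', log_exp]
  ring

lemma mul_add_negMulLog_eq (p : ℝ) (a : A) :
    p * f a + negMulLog p
      = p * log (∑ b, exp (f b)) + softmax f a * negMulLog (p / softmax f a) := by
  have hq := (softmax_pos f a).ne'
  conv_lhs => rw [← div_mul_cancel₀ p hq, negMulLog_mul, negMulLog_softmax]
  field_simp
  ring

theorem sum_mul_add_negMulLog_le_log_sum_exp {p : A → ℝ} (hp : p ∈ stdSimplex ℝ A) :
    ∑ a, (p a * f a + negMulLog (p a)) ≤ log (∑ b, exp (f b)) := by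
  calc ∑ a, (p a * f a + negMulLog (p a))
      ≤ ∑ a, (p a * log (∑ b, exp (f b)) + softmax f a * (1 - p a / softmax f a)) := by
        refine sum_le_sum fun a _ ↦ ?_
        rw [mul_add_negMulLog_eq]
        gcongr
        · exact (softmax_pos f a).le
        · exact negMulLog_le_one_sub_self (div_nonneg (hp.1 a) (softmax_pos f a).le)
    _ = log (∑ b, exp (f b)) := by
        simp only [mul_sub, mul_one, mul_div_cancel₀ _ (softmax_pos f _).ne', sum_add_distrib,
          sum_sub_distrib, ← sum_mul, hp.2, sum_softmax]
        ring

theorem sum_softmax_mul_add_negMulLog_eq_log_sum_exp :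
    ∑ a, (softmax f a * f a + negMulLog (softmax f a)) = log (∑ b, exp (f b)) := by
  simp only [negMulLog_softmax, ← mul_add, add_sub_cancel, ← sum_mul, sum_softmax, one_mul]

end Softmax

section Objective

variable {S A : Type*} [Fintype S] (γ : ℝ) (P : S → A → S → ℝ) (Q : S → A → ℝ)

def recoveredReward (V : S → ℝ) (s : S) (a : A) : ℝ := Q s a - γ * ∑ s', P s a s' * V s'

lemma recoveredReward_antitone (hγ : 0 ≤ γ) (hP : ∀ s a s', 0 ≤ P s a s') :
    Antitone (recoveredReward γ P Q) := fun V W hVW s a ↦ by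
  have : ∑ s', P s a s' * V s' ≤ ∑ s', P s a s' * W s' :=
    sum_le_sum fun s' _ ↦ mul_le_mul_of_nonneg_left (hVW s') (hP s a s')
  simp only [recoveredReward]
  gcongr

variable [Fintype A]

def valueObjective (ρ : S → A → ℝ) (μ0 : S → ℝ) (ψ : ℝ → ℝ) (V : S → ℝ) : ℝ :=
  (∑ s, ∑ a, ρ s a * recoveredReward γ P Q V s a) - (1 - γ) * (∑ s, μ0 s * V s)
    + (∑ s, ∑ a, ψ (recoveredReward γ P Q V s a))

lemma valueObjective_antitone (hγ0 : 0 ≤ γ) (hγ1 : γ < 1) (hP : ∀ s a s', 0 ≤ P s a s')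
    {ρ : S → A → ℝ} (hρ : ∀ s a, 0 ≤ ρ s a) {μ0 : S → ℝ} (hμ0 : ∀ s, 0 ≤ μ0 s)
    {ψ : ℝ → ℝ} (hψ : Monotone ψ) :
    Antitone (valueObjective γ P Q ρ μ0 ψ) := fun V W hVW ↦ by
  have hr := recoveredReward_antitone γ P Q hγ0 hP hVW
  unfold valueObjective
  refine add_le_add (sub_le_sub ?_ ?_) ?_
  · exact sum_le_sum fun s _ ↦ sum_le_sum fun a _ ↦ mul_le_mul_of_nonneg_left (hr s a) (hρ s a)
  · exact mul_le_mul_of_nonneg_left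
      (sum_le_sum fun s _ ↦ mul_le_mul_of_nonneg_left (hVW s) (hμ0 s)) (by linarith)
  · exact sum_le_sum fun s _ ↦ sum_le_sum fun a _ ↦ hψ (hr s a)

end Objective

theorem stmt_7_general {S A : Type*} [Fintype S] [Fintype A] [Nonempty A]
    (γ : ℝ) (hγ0 : 0 ≤ γ) (hγ1 : γ < 1)
    (P : S → A → S → ℝ)
    (hP0 : ∀ s a s', 0 ≤ P s a s')
    (Q : S → A → ℝ)
    (ρUN : S → A → ℝ) (hρUN : ∀ s a, 0 ≤ ρUN s a)
    (μ0 : S → ℝ) (hμ0 : ∀ s, 0 < μ0 s)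
    (ψ : ℝ → ℝ) (hψmono : Monotone ψ)
    (Vπ : (S → A → ℝ) → S → ℝ)
    (hVπ : ∀ π s, Vπ π s = ∑ a, (π s a * Q s a + Real.negMulLog (π s a)))
    (rπ : (S → A → ℝ) → S → A → ℝ)
    (hrπ : ∀ π s a, rπ π s a = Q s a - γ * ∑ s', P s a s' * Vπ π s')
    (L : (S → A → ℝ) → ℝ)
    (hL : ∀ π, L π = (∑ s, ∑ a, ρUN s a * rπ π s a)
      - (1 - γ) * (∑ s, μ0 s * Vπ π s) + (∑ s, ∑ a, ψ (rπ π s a)))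
    (VQ : S → ℝ) (hVQ : ∀ s, VQ s = Real.log (∑ a, Real.exp (Q s a)))
    (rQ : S → A → ℝ) (hrQ : ∀ s a, rQ s a = Q s a - γ * ∑ s', P s a s' * VQ s') :
    ((∑ s, ∑ a, ρUN s a * rQ s a) - (1 - γ) * (∑ s, μ0 s * VQ s)
        + (∑ s, ∑ a, ψ (rQ s a)))
      ∈ L '' {π : S → A → ℝ | ∀ s, π s ∈ stdSimplex ℝ A} ∧
    ∀ π : S → A → ℝ, (∀ s, π s ∈ stdSimplex ℝ A) →
      ((∑ s, ∑ a, ρUN s a * rQ s a) - (1 - γ) * (∑ s, μ0 s * VQ s)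
        + (∑ s, ∑ a, ψ (rQ s a))) ≤ L π := by
  have hrQ' : rQ = recoveredReward γ P Q VQ := funext₂ hrQ
  have hL' : ∀ π, L π = valueObjective γ P Q ρUN μ0 ψ (Vπ π) := fun π ↦ by
    have : rπ π = recoveredReward γ P Q (Vπ π) := funext₂ (hrπ π)
    rw [hL, this, valueObjective]
  have hF := valueObjective_antitone γ P Q hγ0 hγ1 hP0 hρUN (fun s ↦ (hμ0 s).le) hψmono
  rw [hrQ', ← valueObjective]
  refine ⟨⟨fun s ↦ softmax (Q s), fun s ↦ softmax_mem_stdSimplex (Q s), ?_⟩, fun π hπ ↦ ?_⟩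
  · have hV : Vπ (fun s ↦ softmax (Q s)) = VQ := funext fun s ↦ by
      rw [hVπ, hVQ, sum_softmax_mul_add_negMulLog_eq_log_sum_exp]
    rw [hL', hV]
  · have hV : Vπ π ≤ VQ := fun s ↦ by
      rw [hVπ, hVQ]
      exact sum_mul_add_negMulLog_le_log_sum_exp (Q s) (hπ s)
    rw [hL']
    exact hF hV

/-- Proposition 2(ii): the Q-space objective `F(Q)`, built from the soft value
`VQ s = log ∑ exp Q(s,·)` and recovered reward `rQ = Q - γ P VQ`, is the least
value of `L(·, Q)` over the set of policies. -/
theorem stmt_7 {S A : Type*} [Fintype S] [Fintype A] [Nonempty S] [Nonempty A]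
    (γ : ℝ) (hγ0 : 0 ≤ γ) (hγ1 : γ < 1)
    (P : S → A → S → ℝ)
    (hP0 : ∀ s a s', 0 ≤ P s a s') (hP1 : ∀ s a, ∑ s', P s a s' = 1)
    (Q : S → A → ℝ)
    (ρUN : S → A → ℝ) (hρUN : ∀ s a, 0 ≤ ρUN s a)
    (μ0 : S → ℝ) (hμ0 : ∀ s, 0 < μ0 s)
    (ψ : ℝ → ℝ) (hψmono : Monotone ψ)
    (Vπ : (S → A → ℝ) → S → ℝ)
    (hVπ : ∀ π s, Vπ π s = ∑ a, (π s a * Q s a + Real.negMulLog (π s a)))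
    (rπ : (S → A → ℝ) → S → A → ℝ)
    (hrπ : ∀ π s a, rπ π s a = Q s a - γ * ∑ s', P s a s' * Vπ π s')
    (L : (S → A → ℝ) → ℝ)
    (hL : ∀ π, L π = (∑ s, ∑ a, ρUN s a * rπ π s a)
      - (1 - γ) * (∑ s, μ0 s * Vπ π s) + (∑ s, ∑ a, ψ (rπ π s a)))
    (VQ : S → ℝ) (hVQ : ∀ s, VQ s = Real.log (∑ a, Real.exp (Q s a)))
    (rQ : S → A → ℝ) (hrQ : ∀ s a, rQ s a = Q s a - γ * ∑ s', P s a s' * VQ s') :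
    ((∑ s, ∑ a, ρUN s a * rQ s a) - (1 - γ) * (∑ s, μ0 s * VQ s)
        + (∑ s, ∑ a, ψ (rQ s a)))
      ∈ L '' {π : S → A → ℝ | ∀ s, π s ∈ stdSimplex ℝ A} ∧
    ∀ π : S → A → ℝ, (∀ s, π s ∈ stdSimplex ℝ A) →
      ((∑ s, ∑ a, ρUN s a * rQ s a) - (1 - γ) * (∑ s, μ0 s * VQ s)
        + (∑ s, ∑ a, ψ (rQ s a))) ≤ L π :=
  stmt_7_general γ hγ0 hγ1 P hP0 Q ρUN hρUN μ0 hμ0 ψ hψmono Vπ hVπ rπ hrπ L hL VQ hVQ rQ hrQ
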